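/- On the Riemannian product M = ℝ^k × S^{n-k} with the product metric g = (flat metric) + g_{S^{n-k}}, n ≥ 4, 2 ≤ k ≤ n-2, and potential f(x,θ) = |x|²/2, the pair (g, f) is a gradient shrinking Ricci soliton with harmonic Weyl tensor (indeed vanishing Cotton tensor), but the radial Weyl curvature W(∇f,·,·,·) does not vanish identically. -/

import Mathlib

/- STATEMENT 11: On ℝ^k × S^{n-k} (n ≥ 4, 2 ≤ k ≤ n-2) with the product metric of
the flat metric and the round sphere metric (normalized so the sphere has Ricci
curvature equal to the metric), and potential f(x,θ) = |x|²/2, the pair (g,f) is a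
gradient shrinking Ricci soliton (Ric + ∇²f = λ g with λ = 1 > 0) with vanishing
Cotton tensor (harmonic Weyl tensor), but the radial Weyl curvature W(∇f,·,·,·)
does not vanish identically.  Formulation in a global coordinate chart
ℝ^k × ℝ^{n-k} ⊆ ℝⁿ (stereographic coordinates on the sphere factor, in which the
round metric of radius √(n-k-1) is (n-k-1)·4/(1+|y|²)² δ); all curvature
quantities are defined from g via partial derivatives. -/

open scoped BigOperators

noncomputable section

abbrev Pt (m : ℕ) := EuclideanSpace ℝ (Fin m)

/-- Partial derivative of a scalar function. -/
def pd {m : ℕ} (f : Pt m → ℝ) (i : Fin m) (x : Pt m) : ℝ :=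
  fderiv ℝ f x (EuclideanSpace.single i 1)

/-- Inverse metric. -/
def ginv {m : ℕ} (g : Pt m → Fin m → Fin m → ℝ) (x : Pt m) : Fin m → Fin m → ℝ :=
  (show Matrix (Fin m) (Fin m) ℝ from g x)⁻¹

/-- Christoffel symbols Γ^k_{ij} of the Levi-Civita connection. -/
def Christoffel {m : ℕ} (g : Pt m → Fin m → Fin m → ℝ) (x : Pt m) (k i j : Fin m) : ℝ :=
  (1/2) * ∑ l, ginv g x k l *
    (pd (fun y => g y l j) i x + pd (fun y => g y l i) j x - pd (fun y => g y i j) l x)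

/-- (3,1)-Riemann curvature R^d_{abc}. -/
def RiemUp {m : ℕ} (g : Pt m → Fin m → Fin m → ℝ) (x : Pt m) (d a b c : Fin m) : ℝ :=
  pd (fun y => Christoffel g y d b c) a x - pd (fun y => Christoffel g y d a c) b x
    + ∑ e, Christoffel g x d a e * Christoffel g x e b c
    - ∑ e, Christoffel g x d b e * Christoffel g x e a c

/-- (4,0)-Riemann curvature R_{abcd}. -/
def Riem {m : ℕ} (g : Pt m → Fin m → Fin m → ℝ) (x : Pt m) (a b c d : Fin m) : ℝ :=
  ∑ e, g x d e * RiemUp g x e a b c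

/-- Ricci curvature. -/
def Ric {m : ℕ} (g : Pt m → Fin m → Fin m → ℝ) (x : Pt m) (b c : Fin m) : ℝ :=
  ∑ a, RiemUp g x a a b c

/-- Scalar curvature. -/
def Scal {m : ℕ} (g : Pt m → Fin m → Fin m → ℝ) (x : Pt m) : ℝ :=
  ∑ b, ∑ c, ginv g x b c * Ric g x b c

/-- Covariant Hessian ∇²f. -/
def Hess {m : ℕ} (g : Pt m → Fin m → Fin m → ℝ) (f : Pt m → ℝ) (x : Pt m)
    (i j : Fin m) : ℝ :=
  pd (fun y => pd f j y) i x - ∑ k, Christoffel g x k i j * pd f k x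

/-- Covariant derivative ∇_c R_{ab} of the Ricci tensor. -/
def CovDRic {m : ℕ} (g : Pt m → Fin m → Fin m → ℝ) (x : Pt m) (a b c : Fin m) : ℝ :=
  pd (fun y => Ric g y a b) c x - ∑ d, Christoffel g x d c a * Ric g x d b
    - ∑ d, Christoffel g x d c b * Ric g x a d

/-- Cotton tensor. -/
def Cotton {m : ℕ} (g : Pt m → Fin m → Fin m → ℝ) (x : Pt m) (a b c : Fin m) : ℝ :=
  CovDRic g x a b c - CovDRic g x a c b
    - (1/(2*((m:ℝ)-1))) * (pd (fun y => Scal g y) c x * g x a b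
        - pd (fun y => Scal g y) b x * g x a c)

/-- Weyl tensor. -/
def Weyl {m : ℕ} (g : Pt m → Fin m → Fin m → ℝ) (x : Pt m) (a b c d : Fin m) : ℝ :=
  Riem g x a b c d + Scal g x/(((m:ℝ)-1)*((m:ℝ)-2)) * (g x a c * g x b d - g x a d * g x b c)
    - (1/((m:ℝ)-2)) * (Ric g x a c * g x b d - Ric g x a d * g x b c
        + Ric g x b d * g x a c - Ric g x b c * g x a d)

/-- The gradient ∇^a f. -/
def gradUp {m : ℕ} (g : Pt m → Fin m → Fin m → ℝ) (f : Pt m → ℝ) (x : Pt m)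
    (a : Fin m) : ℝ :=
  ∑ b, ginv g x a b * pd f b x

/-- Projection to the fiber coordinates. -/
def tail {m : ℕ} (x : Pt (m+1)) : Pt m := WithLp.toLp 2 (fun i : Fin m => x i.succ)

/-- The warped product metric dt² + w(t)² g_N in coordinates (t, x²,…,xⁿ). -/
def warped {m : ℕ} (w : ℝ → ℝ) (gN : Pt m → Fin m → Fin m → ℝ) (x : Pt (m+1))
    (a b : Fin (m+1)) : ℝ :=
  if ha : a = 0 then (if b = 0 then (1:ℝ) else 0)
  else if hb : b = 0 then 0
  else (w (x 0))^2 * gN (tail x) (a.pred ha) (b.pred hb)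

/-- The product metric on ℝ^k × S^{n-k} in stereographic coordinates. -/
def prodMetric (n k : ℕ) (x : Pt n) (a b : Fin n) : ℝ :=
  if a = b then
    (if (a : ℕ) < k then 1
     else ((n:ℝ) - k - 1) * 4 /
       (1 + ∑ j ∈ Finset.univ.filter (fun j : Fin n => k ≤ (j:ℕ)), (x j)^2)^2)
  else 0

/-- The potential f(x, θ) = |x|²/2. -/
def potential (n k : ℕ) (x : Pt n) : ℝ :=
  (1/2) * ∑ j ∈ Finset.univ.filter (fun j : Fin n => (j:ℕ) < k), (x j)^2

/-!
In these coordinates `g = diag(1, …, 1, c, …, c)`, where `c = 4(n-k-1)/(1+|y|²)²` depends only on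
the sphere coordinates `y`. With `φ = d log c` and `χ` the indicator of the sphere directions, the
Christoffel symbols are `Γᵈᵢⱼ = ½ χ_d (δ_dj φ_i + δ_di φ_j - δ_ij χ_i φ_d)`, and the identity
`∂ᵢ φₘ = -4 δᵢₘ / (1+|y|²) + ½ φᵢ φₘ` turns the contractions of `∂Γ` and `ΓΓ` into `Ric = χ g`.
As `∇²f = (1 - χ) g`, this is the soliton equation; the scalar curvature `n - k` is constant and
`∇ Ric = 0`, so the Cotton tensor vanishes. On the other hand `Γᵈ = 0` for a flat direction `d`,
so `R(·,·,·,∂_d) = 0`, and for two flat directions `W(∂₀, ∂₁, ∂₀, ∂₁) = (n-k)/((n-1)(n-2))`; at the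
point `x = ∂₀` of the flat factor this is `W(∇f, ∂₁, ∂₀, ∂₁)`.
-/

section PartialDerivative

variable {m : ℕ}

theorem pd_congr {f g : Pt m → ℝ} (h : ∀ y, f y = g y) (i : Fin m) (x : Pt m) :
    pd f i x = pd g i x := by
  rw [funext h]

theorem pd_const (r : ℝ) (i : Fin m) (x : Pt m) : pd (fun _ => r) i x = 0 := by
  simp [pd]

theorem pd_ite_zero (p : Prop) [Decidable p] (f : Pt m → ℝ) (i : Fin m) (x : Pt m) :
    pd (fun y => if p then f y else 0) i x = if p then pd f i x else 0 := by
  split_ifs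
  · rfl
  · exact pd_const 0 i x

theorem differentiableAt_coord (j : Fin m) (x : Pt m) :
    DifferentiableAt ℝ (fun y : Pt m => y j) x :=
  (EuclideanSpace.proj (𝕜 := ℝ) j).differentiableAt

theorem pd_coord (j i : Fin m) (x : Pt m) :
    pd (fun y : Pt m => y j) i x = if j = i then 1 else 0 := by
  rw [pd, show (fun y : Pt m => y j) = EuclideanSpace.proj j from rfl, ContinuousLinearMap.fderiv]
  simp [PiLp.single_apply]

variable {f g : Pt m → ℝ} {x : Pt m}

theorem pd_add (hf : DifferentiableAt ℝ f x) (hg : DifferentiableAt ℝ g x) (i : Fin m) :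
    pd (fun y => f y + g y) i x = pd f i x + pd g i x := by
  simp [pd, fderiv_fun_add hf hg]

theorem pd_sub (hf : DifferentiableAt ℝ f x) (hg : DifferentiableAt ℝ g x) (i : Fin m) :
    pd (fun y => f y - g y) i x = pd f i x - pd g i x := by
  simp [pd, fderiv_fun_sub hf hg]

theorem pd_const_mul (hf : DifferentiableAt ℝ f x) (r : ℝ) (i : Fin m) :
    pd (fun y => r * f y) i x = r * pd f i x := by
  simp [pd, fderiv_const_mul hf r]

theorem pd_mul (hf : DifferentiableAt ℝ f x) (hg : DifferentiableAt ℝ g x) (i : Fin m) :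
    pd (fun y => f y * g y) i x = pd f i x * g x + f x * pd g i x := by
  simp only [pd, fderiv_fun_mul hf hg, add_apply, smul_apply, smul_eq_mul]
  ring

theorem pd_comp {h : ℝ → ℝ} {h' : ℝ} (hh : HasDerivAt h h' (f x)) (hf : DifferentiableAt ℝ f x)
    (i : Fin m) : pd (fun y => h (f y)) i x = h' * pd f i x := by
  rw [pd, pd, show (fun y => h (f y)) = h ∘ f from rfl,
    (hh.comp_hasFDerivAt x hf.hasFDerivAt).fderiv]
  simp

theorem pd_sq (hf : DifferentiableAt ℝ f x) (i : Fin m) :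
    pd (fun y => f y ^ 2) i x = 2 * f x * pd f i x := by
  rw [pd_comp (hasDerivAt_pow 2 (f x)) hf]
  ring

theorem differentiableAt_fun_div (hf : DifferentiableAt ℝ f x) (hg : DifferentiableAt ℝ g x)
    (hgx : g x ≠ 0) : DifferentiableAt ℝ (fun y => f y / g y) x := by
  simp only [div_eq_mul_inv]
  exact hf.mul (hg.inv hgx)

theorem pd_div (hf : DifferentiableAt ℝ f x) (hg : DifferentiableAt ℝ g x) (hgx : g x ≠ 0)
    (i : Fin m) : pd (fun y => f y / g y) i x = (pd f i x * g x - f x * pd g i x) / g x ^ 2 := by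
  simp only [div_eq_mul_inv]
  rw [pd_mul hf (hg.fun_inv hgx), pd_comp (hasDerivAt_inv hgx) hg]
  field_simp
  ring

theorem pd_sum {ι : Type*} (s : Finset ι) (A : ι → Pt m → ℝ)
    (h : ∀ j ∈ s, DifferentiableAt ℝ (A j) x) (i : Fin m) :
    pd (fun y => ∑ j ∈ s, A j y) i x = ∑ j ∈ s, pd (A j) i x := by
  simp [pd, fderiv_fun_sum h]

theorem pd_sum_sq_coord (s : Finset (Fin m)) (i : Fin m) (x : Pt m) :
    pd (fun y : Pt m => ∑ j ∈ s, y j ^ 2) i x = if i ∈ s then 2 * x i else 0 := by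
  rw [pd_sum s (fun j y => y j ^ 2) fun j _ => (differentiableAt_coord j x).pow 2]
  simp [pd_sq (differentiableAt_coord _ x), pd_coord]

end PartialDerivative

section DiagonalMetric

variable {m : ℕ} (h : Fin m → Pt m → ℝ) (x : Pt m)

def diagMetric (y : Pt m) (a b : Fin m) : ℝ := if a = b then h a y else 0

-- `ginv` elaborates to the entrywise inverse, which is the matrix inverse for a diagonal metric.
theorem ginv_diagMetric (a b : Fin m) :
    ginv (diagMetric h) x a b = if a = b then (h a x)⁻¹ else 0 := by
  simp only [ginv, diagMetric, Pi.inv_apply]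
  split_ifs <;> simp

theorem pd_diagMetric (a b i : Fin m) :
    pd (fun y => diagMetric h y a b) i x = if a = b then pd (h a) i x else 0 :=
  pd_ite_zero _ _ i x

theorem Christoffel_diagMetric (d i j : Fin m) :
    Christoffel (diagMetric h) x d i j = (h d x)⁻¹ / 2 *
      ((if d = j then pd (h d) i x else 0) + (if d = i then pd (h d) j x else 0)
        - if i = j then pd (h i) d x else 0) := by
  rw [Christoffel, Finset.sum_eq_single d]
  · simp only [ginv_diagMetric, pd_diagMetric, if_true]
    ring
  · intro l _ hl
    rw [ginv_diagMetric, if_neg (Ne.symm hl), zero_mul]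
  · simp

end DiagonalMetric

namespace ProductSoliton

open Finset

def δ {m : ℕ} (a b : Fin m) : ℝ := if a = b then 1 else 0

def χ (k : ℕ) {m : ℕ} (a : Fin m) : ℝ := if k ≤ (a : ℕ) then 1 else 0

def stereoDenom (n k : ℕ) (x : Pt n) : ℝ :=
  1 + ∑ j ∈ univ.filter (fun j : Fin n => k ≤ (j : ℕ)), x j ^ 2

def confFactor (n k : ℕ) (x : Pt n) : ℝ := ((n : ℝ) - k - 1) * 4 / stereoDenom n k x ^ 2

def φ (n k : ℕ) (a : Fin n) (x : Pt n) : ℝ :=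
  if k ≤ (a : ℕ) then -4 * x a / stereoDenom n k x else 0

def Φ (n k : ℕ) (x : Pt n) : ℝ := ∑ e, φ n k e x ^ 2

section Indices

variable {m : ℕ} (k : ℕ)

theorem δ_self (a : Fin m) : δ a a = 1 := if_pos rfl

theorem δ_of_ne {a b : Fin m} (h : a ≠ b) : δ a b = 0 := if_neg h

theorem δ_comm (a b : Fin m) : δ a b = δ b a := by
  simp only [δ, eq_comm]

theorem ite_eq_δ_mul (a b : Fin m) (r : ℝ) : (if a = b then r else 0) = δ a b * r := by
  simp [δ]

theorem sum_δ_mul (c : Fin m) (f : Fin m → ℝ) : ∑ a, δ a c * f a = f c := by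
  simp [δ]

theorem sum_δ_mul' (c : Fin m) (f : Fin m → ℝ) : ∑ a, δ c a * f a = f c := by
  simp [δ]

theorem δ_mul_χ (b c : Fin m) : δ b c * χ k c = δ b c * χ k b := by
  rcases eq_or_ne b c with rfl | h
  · rfl
  · simp [δ_of_ne h]

theorem χ_mul_self (a : Fin m) : χ k a * χ k a = χ k a := by
  unfold χ; split_ifs <;> norm_num

theorem χ_mul_χ_mul_δ (b c : Fin m) : χ k b * χ k c * δ b c = δ b c * χ k b := by
  rcases eq_or_ne b c with rfl | h
  · rw [δ_self, χ_mul_self, mul_one, one_mul]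
  · simp [δ_of_ne h]

theorem χ_of_lt {a : Fin m} (ha : (a : ℕ) < k) : χ k a = 0 := if_neg (by omega)

theorem χ_of_le {a : Fin m} (ha : k ≤ (a : ℕ)) : χ k a = 1 := if_pos ha

theorem sum_χ (hk : k ≤ m) : ∑ a : Fin m, χ k a = (m : ℝ) - k := by
  have hfib : (univ.filter fun a : Fin m => k ≤ (a : ℕ)).card = m - k := by
    have hlt := Fin.card_filter_val_lt (n := m) (m := k)
    have hsplit := card_filter_add_card_filter_not (s := univ) fun a : Fin m => (a : ℕ) < k
    simp only [not_lt, card_univ, Fintype.card_fin] at hsplit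
    omega
  simp [χ, Finset.sum_boole, hfib, Nat.cast_sub hk]

end Indices

section ConformalFactor

variable (n k : ℕ) (x : Pt n)

theorem stereoDenom_pos : 0 < stereoDenom n k x := by
  unfold stereoDenom
  positivity

theorem differentiableAt_stereoDenom : DifferentiableAt ℝ (stereoDenom n k) x :=
  (differentiableAt_const 1).fun_add <|
    DifferentiableAt.fun_sum fun j _ => (differentiableAt_coord j x).fun_pow 2

theorem φ_of_le {a : Fin n} (ha : k ≤ (a : ℕ)) : φ n k a x = -4 * x a / stereoDenom n k x :=
  if_pos ha

theorem φ_of_lt {a : Fin n} (ha : (a : ℕ) < k) : φ n k a x = 0 := if_neg (by omega)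

theorem χ_mul_φ (a : Fin n) : χ k a * φ n k a x = φ n k a x := by
  unfold χ φ; split_ifs <;> simp

theorem pd_stereoDenom (i : Fin n) :
    pd (stereoDenom n k) i x = -(1 / 2) * stereoDenom n k x * φ n k i x := by
  have hu := (stereoDenom_pos n k x).ne'
  change pd (fun y => 1 + ∑ j ∈ _, y j ^ 2) i x = _
  rw [pd_add (differentiableAt_const 1)
    (DifferentiableAt.fun_sum fun j _ => (differentiableAt_coord j x).fun_pow 2),
    pd_const, pd_sum_sq_coord, φ]
  simp only [mem_filter, mem_univ, true_and]
  split_ifs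
  · field_simp
    ring
  · simp

theorem confFactor_ne_zero (hkn : k + 1 < n) : confFactor n k x ≠ 0 := by
  have hnk : (0 : ℝ) < n - k - 1 := by
    have : (k : ℝ) + 1 < n := by exact_mod_cast hkn
    linarith
  have := stereoDenom_pos n k x
  unfold confFactor
  positivity

theorem differentiableAt_confFactor : DifferentiableAt ℝ (confFactor n k) x :=
  differentiableAt_fun_div (differentiableAt_const _)
    ((differentiableAt_stereoDenom n k x).fun_pow 2) (pow_ne_zero 2 (stereoDenom_pos n k x).ne')

theorem pd_confFactor (i : Fin n) :
    pd (confFactor n k) i x = confFactor n k x * φ n k i x := by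
  have hu := (stereoDenom_pos n k x).ne'
  change pd (fun y => _ / stereoDenom n k y ^ 2) i x = _
  rw [pd_div (differentiableAt_const _) ((differentiableAt_stereoDenom n k x).fun_pow 2)
    (pow_ne_zero 2 hu), pd_const, pd_sq (differentiableAt_stereoDenom n k x), pd_stereoDenom,
    confFactor]
  field_simp
  ring

theorem differentiableAt_φ (a : Fin n) : DifferentiableAt ℝ (φ n k a) x := by
  unfold φ
  split_ifs
  · exact differentiableAt_fun_div ((differentiableAt_coord a x).const_mul _)
      (differentiableAt_stereoDenom n k x) (stereoDenom_pos n k x).ne'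
  · exact differentiableAt_const 0

theorem pd_φ (a i : Fin n) :
    pd (φ n k a) i x
      = -4 / stereoDenom n k x * (χ k a * δ a i) + 1 / 2 * (φ n k a x * φ n k i x) := by
  have hu := (stereoDenom_pos n k x).ne'
  by_cases ha : k ≤ (a : ℕ)
  · rw [pd_congr (fun y => φ_of_le n k y ha) i x,
      pd_div ((differentiableAt_coord a x).const_mul _) (differentiableAt_stereoDenom n k x) hu,
      pd_const_mul (differentiableAt_coord a x), pd_coord, ite_eq_δ_mul, pd_stereoDenom,
      χ_of_le k ha, φ_of_le n k x ha]
    field_simp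
    ring
  · rw [pd_congr (f := φ n k a) (fun y => if_neg ha) i x, pd_const, χ_of_lt k (by omega),
      φ_of_lt n k x (by omega)]
    ring

theorem Φ_eq : Φ n k x = 16 * (stereoDenom n k x - 1) / stereoDenom n k x ^ 2 := by
  have hφsq (e : Fin n) : φ n k e x ^ 2
      = if k ≤ (e : ℕ) then 16 * x e ^ 2 / stereoDenom n k x ^ 2 else 0 := by
    unfold φ
    split_ifs <;> ring
  rw [Φ, sum_congr rfl fun e _ => hφsq e, ← sum_filter, stereoDenom, add_sub_cancel_left,
    mul_sum, sum_div]

end ConformalFactor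

def prodDiag (n k : ℕ) (a : Fin n) (y : Pt n) : ℝ :=
  if (a : ℕ) < k then 1 else confFactor n k y

theorem prodMetric_eq_diagMetric (n k : ℕ) : prodMetric n k = diagMetric (prodDiag n k) := rfl

theorem pd_prodDiag (n k : ℕ) (a i : Fin n) (x : Pt n) :
    pd (prodDiag n k a) i x = χ k a * (confFactor n k x * φ n k i x) := by
  by_cases ha : (a : ℕ) < k
  · rw [pd_congr (f := prodDiag n k a) (fun y => if_pos ha) i x, pd_const, χ_of_lt k ha, zero_mul]
  · rw [pd_congr (f := prodDiag n k a) (fun y => if_neg ha) i x, pd_confFactor,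
      χ_of_le k (by omega), one_mul]

section Metric

variable {n k : ℕ} (x : Pt n)

theorem prodMetric_of_ne {a b : Fin n} (h : a ≠ b) : prodMetric n k x a b = 0 := if_neg h

theorem prodMetric_self_of_lt {a : Fin n} (ha : (a : ℕ) < k) : prodMetric n k x a a = 1 := by
  simp [prodMetric, ha]

theorem ginv_prodMetric (a b : Fin n) :
    ginv (prodMetric n k) x a b = if a = b then (prodMetric n k x a a)⁻¹ else 0 := by
  rw [prodMetric_eq_diagMetric, ginv_diagMetric, diagMetric, if_pos rfl]

theorem prodMetric_self_ne_zero (hkn : k + 1 < n) (a : Fin n) : prodMetric n k x a a ≠ 0 := by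
  rw [prodMetric_eq_diagMetric, diagMetric, if_pos rfl, prodDiag]
  split_ifs
  · exact one_ne_zero
  · exact confFactor_ne_zero n k x hkn

theorem χ_mul_prodMetric (a b : Fin n) :
    χ k a * prodMetric n k x a b = δ a b * (χ k a * confFactor n k x) := by
  rw [prodMetric_eq_diagMetric, diagMetric, prodDiag, ite_eq_δ_mul]
  by_cases ha : (a : ℕ) < k
  · simp [χ_of_lt k ha]
  · rw [if_neg ha, χ_of_le k (by omega)]
    ring

theorem one_sub_χ_mul_prodMetric (a b : Fin n) :
    (1 - χ k a) * prodMetric n k x a b = δ a b * (1 - χ k a) := by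
  rw [prodMetric_eq_diagMetric, diagMetric, prodDiag, ite_eq_δ_mul]
  by_cases ha : (a : ℕ) < k
  · rw [if_pos ha, χ_of_lt k ha]
    ring
  · rw [if_neg ha, χ_of_le k (by omega)]
    ring

end Metric

def Γ (n k : ℕ) (x : Pt n) (d i j : Fin n) : ℝ :=
  1 / 2 * χ k d * (δ d j * φ n k i x + δ d i * φ n k j x - δ i j * (χ k i * φ n k d x))

section Christoffel

variable {n k : ℕ} (x : Pt n)

theorem Christoffel_prodMetric (hkn : k + 1 < n) (d i j : Fin n) :
    Christoffel (prodMetric n k) x d i j = Γ n k x d i j := by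
  rw [prodMetric_eq_diagMetric, Christoffel_diagMetric, pd_prodDiag, pd_prodDiag, pd_prodDiag,
    ite_eq_δ_mul, ite_eq_δ_mul, ite_eq_δ_mul, Γ]
  by_cases hd : (d : ℕ) < k
  · simp [χ_of_lt k hd, φ_of_lt n k x hd]
  · have hc := confFactor_ne_zero n k x hkn
    rw [prodDiag, if_neg hd, χ_of_le k (by omega)]
    field_simp

theorem Γ_of_lt {d : Fin n} (hd : (d : ℕ) < k) (i j : Fin n) : Γ n k x d i j = 0 := by
  simp [Γ, χ_of_lt k hd]

theorem Γ_comm (d i j : Fin n) : Γ n k x d i j = Γ n k x d j i := by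
  rw [Γ, Γ, δ_comm i j]
  linear_combination (-1 / 2 * χ k d * φ n k d x) * δ_mul_χ k j i

theorem χ_mul_Γ (d i j : Fin n) : χ k d * Γ n k x d i j = Γ n k x d i j := by
  simp only [Γ]
  linear_combination (1 / 2 * (δ d j * φ n k i x + δ d i * φ n k j x
    - δ i j * (χ k i * φ n k d x))) * χ_mul_self k d

theorem differentiableAt_Γ (d i j : Fin n) : DifferentiableAt ℝ (fun y => Γ n k y d i j) x := by
  have hφ := differentiableAt_φ n k x
  exact ((((hφ i).const_mul _).fun_add ((hφ j).const_mul _)).fun_sub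
    (((hφ d).const_mul _).const_mul _)).const_mul _

theorem pd_Γ (d i j a : Fin n) :
    pd (fun y => Γ n k y d i j) a x = 1 / 2 * χ k d * (δ d j * pd (φ n k i) a x
      + δ d i * pd (φ n k j) a x - δ i j * (χ k i * pd (φ n k d) a x)) := by
  have hφ := differentiableAt_φ n k x
  have hi := (hφ i).const_mul (δ d j)
  have hj := (hφ j).const_mul (δ d i)
  have hd := ((hφ d).const_mul (χ k i)).const_mul (δ i j)
  simp only [Γ]
  rw [pd_const_mul ((hi.fun_add hj).fun_sub hd), pd_sub (hi.fun_add hj) hd, pd_add hi hj,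
    pd_const_mul (hφ i), pd_const_mul (hφ j), pd_const_mul ((hφ d).const_mul _),
    pd_const_mul (hφ d)]

end Christoffel

section Ricci

variable {n k : ℕ} (x : Pt n)

theorem sum_Γ_mul (d a : Fin n) (F : Fin n → ℝ) :
    ∑ e, Γ n k x d a e * F e = 1 / 2 * χ k d *
      (φ n k a x * F d + δ d a * ∑ e, F e * φ n k e x - χ k a * φ n k d x * F a) := by
  have h (e : Fin n) : Γ n k x d a e * F e = δ d e * (1 / 2 * χ k d * φ n k a x * F e)
      + 1 / 2 * χ k d * δ d a * (F e * φ n k e x)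
      - δ a e * (1 / 2 * χ k d * χ k a * φ n k d x * F e) := by
    simp only [Γ]
    ring
  rw [sum_congr rfl fun e _ => h e, sum_sub_distrib, sum_add_distrib, sum_δ_mul', sum_δ_mul',
    ← mul_sum]
  ring

theorem sum_Γ_upper_mul (b c : Fin n) (F : Fin n → ℝ) :
    ∑ e, Γ n k x e b c * F e = 1 / 2 *
      (χ k c * F c * φ n k b x + χ k b * F b * φ n k c x
        - δ b c * χ k b * ∑ e, F e * φ n k e x) := by
  have h (e : Fin n) : Γ n k x e b c * F e = δ e c * (1 / 2 * χ k e * φ n k b x * F e)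
      + δ e b * (1 / 2 * χ k e * φ n k c x * F e)
      - 1 / 2 * δ b c * χ k b * (F e * (χ k e * φ n k e x)) := by
    simp only [Γ]
    ring
  simp only [sum_congr rfl fun e _ => h e, sum_sub_distrib, sum_add_distrib, sum_δ_mul, χ_mul_φ,
    ← mul_sum]
  ring

theorem sum_φ_mul_φ : ∑ e, φ n k e x * φ n k e x = Φ n k x := by
  simp only [Φ, sq]

theorem sum_Γ_mul_φ (d a : Fin n) :
    ∑ e, Γ n k x d a e * φ n k e x = 1 / 2 * δ d a * χ k a * Φ n k x := by
  rw [sum_Γ_mul, sum_φ_mul_φ]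
  linear_combination (-1 / 2 * χ k d * φ n k d x) * χ_mul_φ n k x a
    + (-1 / 2 * Φ n k x) * δ_mul_χ k d a

theorem sum_Γ_upper_mul_φ (b c : Fin n) :
    ∑ e, Γ n k x e b c * φ n k e x = φ n k b x * φ n k c x - 1 / 2 * δ b c * χ k b * Φ n k x := by
  rw [sum_Γ_upper_mul, sum_φ_mul_φ]
  linear_combination (1 / 2 * φ n k b x) * χ_mul_φ n k x c
    + (1 / 2 * φ n k c x) * χ_mul_φ n k x b

theorem sum_Γ_self (hk : k ≤ n) (c : Fin n) :
    ∑ a, Γ n k x a a c = ((n : ℝ) - k) / 2 * φ n k c x := by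
  have h (a : Fin n) : Γ n k x a a c = χ k a * (1 / 2 * φ n k c x) := by
    rw [Γ, δ_self]
    linear_combination (-1 / 2 * χ k a * δ a c) * χ_mul_φ n k x a
  rw [sum_congr rfl fun a _ => h a, ← sum_mul, sum_χ k hk]
  ring

theorem sum_χ_mul_pd_φ_self (hk : k ≤ n) :
    ∑ a, χ k a * pd (φ n k a) a x
      = -4 * ((n : ℝ) - k) / stereoDenom n k x + 1 / 2 * Φ n k x := by
  have h (a : Fin n) : χ k a * pd (φ n k a) a x
      = χ k a * (-4 / stereoDenom n k x) + 1 / 2 * (φ n k a x * φ n k a x) := by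
    rw [pd_φ, δ_self]
    linear_combination (-4 / stereoDenom n k x) * χ_mul_self k a
      + (1 / 2 * φ n k a x) * χ_mul_φ n k x a
  rw [sum_congr rfl fun a _ => h a, sum_add_distrib, ← sum_mul, ← mul_sum, sum_χ k hk,
    sum_φ_mul_φ]
  ring

theorem pd_Christoffel_prodMetric (hkn : k + 1 < n) (d i j a : Fin n) :
    pd (fun y => Christoffel (prodMetric n k) y d i j) a x = pd (fun y => Γ n k y d i j) a x :=
  pd_congr (fun y => Christoffel_prodMetric y hkn d i j) a x

theorem sum_pd_Christoffel_upper (hkn : k + 1 < n) (b c : Fin n) :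
    ∑ a, pd (fun y => Christoffel (prodMetric n k) y a b c) a x
      = (2 * ((n : ℝ) - k) - 4) / stereoDenom n k x * (δ b c * χ k b)
        + 1 / 2 * φ n k b x * φ n k c x - 1 / 4 * δ b c * χ k b * Φ n k x := by
  have h (a : Fin n) : pd (fun y => Christoffel (prodMetric n k) y a b c) a x
      = δ a c * (1 / 2 * χ k a * pd (φ n k b) a x) + δ a b * (1 / 2 * χ k a * pd (φ n k c) a x)
        - 1 / 2 * δ b c * χ k b * (χ k a * pd (φ n k a) a x) := by
    rw [pd_Christoffel_prodMetric x hkn, pd_Γ]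
    ring
  rw [sum_congr rfl fun a _ => h a, sum_sub_distrib, sum_add_distrib, sum_δ_mul, sum_δ_mul,
    ← mul_sum, sum_χ_mul_pd_φ_self x (by omega), pd_φ, pd_φ, δ_comm c b]
  linear_combination (-4 / stereoDenom n k x) * χ_mul_χ_mul_δ k b c
    + (1 / 4 * φ n k b x) * χ_mul_φ n k x c + (1 / 4 * φ n k c x) * χ_mul_φ n k x b

theorem sum_pd_Christoffel_self (hkn : k + 1 < n) (b c : Fin n) :
    ∑ a, pd (fun y => Christoffel (prodMetric n k) y a a c) b x
      = ((n : ℝ) - k) / 4 * φ n k b x * φ n k c x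
        - 2 * ((n : ℝ) - k) / stereoDenom n k x * (δ b c * χ k b) := by
  simp only [pd_Christoffel_prodMetric x hkn]
  rw [← pd_sum _ _ fun a _ => differentiableAt_Γ x a a c,
    pd_congr (fun y => sum_Γ_self y (by omega) c), pd_const_mul (differentiableAt_φ n k x c),
    pd_φ, δ_comm c b]
  linear_combination (-2 * ((n : ℝ) - k) / stereoDenom n k x) * δ_mul_χ k b c

theorem sum_Christoffel_self_mul (hkn : k + 1 < n) (b c : Fin n) :
    ∑ a, ∑ e, Christoffel (prodMetric n k) x a a e * Christoffel (prodMetric n k) x e b c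
      = ((n : ℝ) - k) / 2 * φ n k b x * φ n k c x
        - ((n : ℝ) - k) / 4 * δ b c * χ k b * Φ n k x := by
  simp only [Christoffel_prodMetric x hkn]
  rw [sum_comm]
  simp only [← sum_mul, sum_Γ_self x (by omega : k ≤ n)]
  have hpull : ∑ e, ((n : ℝ) - k) / 2 * φ n k e x * Γ n k x e b c
      = ((n : ℝ) - k) / 2 * ∑ e, Γ n k x e b c * φ n k e x := by
    rw [mul_sum]
    exact sum_congr rfl fun e _ => by ring
  rw [hpull, sum_Γ_upper_mul_φ]
  ring

theorem sum_Christoffel_mul_Christoffel (hkn : k + 1 < n) (b c : Fin n) :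
    ∑ a, ∑ e, Christoffel (prodMetric n k) x a b e * Christoffel (prodMetric n k) x e a c
      = (((n : ℝ) - k) / 4 + 1 / 2) * φ n k b x * φ n k c x
        - 1 / 2 * δ b c * χ k b * Φ n k x := by
  have h (a : Fin n) : ∑ e, Γ n k x a b e * Γ n k x e a c
      = 1 / 2 * φ n k b x * Γ n k x a a c
        + δ a b * (1 / 2 * χ k a * ∑ e, Γ n k x e a c * φ n k e x)
        - 1 / 2 * χ k b * (Γ n k x b c a * φ n k a x) := by
    rw [sum_Γ_mul, Γ_comm x b a c]
    linear_combination (1 / 2 * φ n k b x) * χ_mul_Γ x a a c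
      + (-1 / 2 * χ k b * Γ n k x b c a) * χ_mul_φ n k x a
  simp only [Christoffel_prodMetric x hkn]
  rw [sum_congr rfl fun a _ => h a, sum_sub_distrib, sum_add_distrib, ← mul_sum,
    sum_Γ_self x (by omega), sum_δ_mul, ← mul_sum, sum_Γ_mul_φ, sum_Γ_upper_mul_φ]
  linear_combination (1 / 2 * φ n k c x) * χ_mul_φ n k x b
    + (-1 / 4 * δ b c * Φ n k x) * χ_mul_self k b + (-1 / 4 * Φ n k x) * χ_mul_χ_mul_δ k b c

theorem Ric_prodMetric (hkn : k + 1 < n) (b c : Fin n) :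
    Ric (prodMetric n k) x b c = χ k b * prodMetric n k x b c := by
  have hsplit : Ric (prodMetric n k) x b c
      = ∑ a, pd (fun y => Christoffel (prodMetric n k) y a b c) a x
        - ∑ a, pd (fun y => Christoffel (prodMetric n k) y a a c) b x
        + ∑ a, ∑ e, Christoffel (prodMetric n k) x a a e * Christoffel (prodMetric n k) x e b c
        - ∑ a, ∑ e, Christoffel (prodMetric n k) x a b e
            * Christoffel (prodMetric n k) x e a c := by
    simp only [Ric, RiemUp, sum_sub_distrib, sum_add_distrib]
  have hu := (stereoDenom_pos n k x).ne'
  rw [hsplit, sum_pd_Christoffel_upper x hkn, sum_pd_Christoffel_self x hkn,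
    sum_Christoffel_self_mul x hkn, sum_Christoffel_mul_Christoffel x hkn, χ_mul_prodMetric,
    Φ_eq, confFactor]
  field_simp
  ring

end Ricci

section Soliton

variable {n k : ℕ} (x : Pt n)

theorem pd_potential (i : Fin n) : pd (potential n k) i x = (1 - χ k i) * x i := by
  change pd (fun y => 1 / 2 * ∑ j ∈ _, y j ^ 2) i x = _
  rw [pd_const_mul (DifferentiableAt.fun_sum fun j _ => (differentiableAt_coord j x).fun_pow 2),
    pd_sum_sq_coord, χ]
  simp only [mem_filter, mem_univ, true_and]
  split_ifs <;> first | omega | ring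

theorem Γ_mul_one_sub_χ (d i j : Fin n) : Γ n k x d i j * (1 - χ k d) = 0 := by
  linear_combination -χ_mul_Γ x d i j

theorem Hess_potential (hkn : k + 1 < n) (a b : Fin n) :
    Hess (prodMetric n k) (potential n k) x a b = (1 - χ k a) * prodMetric n k x a b := by
  have hΓ (l : Fin n) : Christoffel (prodMetric n k) x l a b * pd (potential n k) l x = 0 := by
    rw [Christoffel_prodMetric x hkn, pd_potential, ← mul_assoc, Γ_mul_one_sub_χ, zero_mul]
  rw [Hess, pd_congr (fun y => pd_potential y b), pd_const_mul (differentiableAt_coord b x),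
    pd_coord, sum_eq_zero fun l _ => hΓ l, ite_eq_δ_mul, δ_comm, one_sub_χ_mul_prodMetric]
  linear_combination -δ_mul_χ k a b

theorem Ric_add_Hess_potential (hkn : k + 1 < n) (a b : Fin n) :
    Ric (prodMetric n k) x a b + Hess (prodMetric n k) (potential n k) x a b
      = prodMetric n k x a b := by
  rw [Ric_prodMetric x hkn, Hess_potential x hkn]
  ring

end Soliton

section Cotton

variable {n k : ℕ} (x : Pt n)

theorem Scal_prodMetric (hkn : k + 1 < n) : Scal (prodMetric n k) x = n - k := by
  have h (b : Fin n) : ∑ c, ginv (prodMetric n k) x b c * Ric (prodMetric n k) x b c = χ k b := by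
    rw [sum_eq_single b (fun c _ hc => by rw [ginv_prodMetric, if_neg (Ne.symm hc), zero_mul])
      (by simp), ginv_prodMetric, if_pos rfl, Ric_prodMetric x hkn]
    field_simp [prodMetric_self_ne_zero x hkn b]
  rw [Scal, sum_congr rfl fun b _ => h b, sum_χ k (by omega)]

theorem pd_Scal_prodMetric (hkn : k + 1 < n) (c : Fin n) :
    pd (fun y => Scal (prodMetric n k) y) c x = 0 := by
  rw [pd_congr (fun y => Scal_prodMetric y hkn), pd_const]

theorem Γ_add_Γ (a b c : Fin n) :
    Γ n k x b c a + Γ n k x a c b = δ a b * χ k a * φ n k c x := by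
  rw [Γ, Γ, δ_comm b a, δ_comm c a, δ_comm c b]
  linear_combination (1 / 2 * φ n k c x) * δ_mul_χ k a b
    + (-1 / 2 * χ k a * φ n k a x) * δ_mul_χ k b c + (-1 / 2 * χ k b * δ b c) * χ_mul_φ n k x a
    + (-1 / 2 * χ k b * φ n k b x) * δ_mul_χ k a c + (-1 / 2 * δ a c * χ k a) * χ_mul_φ n k x b

theorem CovDRic_prodMetric (hkn : k + 1 < n) (a b c : Fin n) :
    CovDRic (prodMetric n k) x a b c = 0 := by
  have hc := differentiableAt_confFactor n k x
  have h₁ (d : Fin n) : Christoffel (prodMetric n k) x d c a * Ric (prodMetric n k) x d b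
      = δ d b * (confFactor n k x * (χ k d * Γ n k x d c a)) := by
    rw [Christoffel_prodMetric x hkn, Ric_prodMetric x hkn, χ_mul_prodMetric]
    ring
  have h₂ (d : Fin n) : Christoffel (prodMetric n k) x d c b * Ric (prodMetric n k) x a d
      = δ a d * (confFactor n k x * (χ k d * Γ n k x d c b)) := by
    rw [Christoffel_prodMetric x hkn, Ric_prodMetric x hkn, χ_mul_prodMetric]
    linear_combination (-confFactor n k x * Γ n k x d c b) * δ_mul_χ k a d
  rw [CovDRic, pd_congr (fun y => (Ric_prodMetric y hkn a b).trans (χ_mul_prodMetric y a b)),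
    pd_const_mul (hc.const_mul _), pd_const_mul hc, pd_confFactor, sum_congr rfl fun d _ => h₁ d,
    sum_congr rfl fun d _ => h₂ d, sum_δ_mul, sum_δ_mul', χ_mul_Γ, χ_mul_Γ]
  linear_combination (-confFactor n k x) * Γ_add_Γ x a b c

theorem Cotton_prodMetric (hkn : k + 1 < n) (a b c : Fin n) :
    Cotton (prodMetric n k) x a b c = 0 := by
  rw [Cotton, CovDRic_prodMetric x hkn, CovDRic_prodMetric x hkn, pd_Scal_prodMetric x hkn,
    pd_Scal_prodMetric x hkn]
  ring

end Cotton

section Weyl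

variable {n k : ℕ} (x : Pt n)

theorem RiemUp_prodMetric_of_lt (hkn : k + 1 < n) {d : Fin n} (hd : (d : ℕ) < k) (a b c : Fin n) :
    RiemUp (prodMetric n k) x d a b c = 0 := by
  simp [RiemUp, pd_Christoffel_prodMetric x hkn, Christoffel_prodMetric x hkn, Γ_of_lt _ hd,
    pd_const]

theorem Riem_prodMetric_of_lt (hkn : k + 1 < n) {d : Fin n} (hd : (d : ℕ) < k) (a b c : Fin n) :
    Riem (prodMetric n k) x a b c d = 0 := by
  refine sum_eq_zero fun e _ => ?_
  rcases eq_or_ne d e with rfl | hde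
  · rw [RiemUp_prodMetric_of_lt x hkn hd, mul_zero]
  · rw [prodMetric_of_ne x hde, zero_mul]

theorem Weyl_prodMetric_of_lt (hkn : k + 1 < n) {a b : Fin n} (ha : (a : ℕ) < k)
    (hb : (b : ℕ) < k) (hab : a ≠ b) :
    Weyl (prodMetric n k) x a b a b = ((n : ℝ) - k) / (((n : ℝ) - 1) * ((n : ℝ) - 2)) := by
  rw [Weyl, Riem_prodMetric_of_lt x hkn hb, Scal_prodMetric x hkn, Ric_prodMetric x hkn,
    Ric_prodMetric x hkn, Ric_prodMetric x hkn, Ric_prodMetric x hkn, χ_of_lt k ha, χ_of_lt k hb,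
    prodMetric_self_of_lt x ha, prodMetric_self_of_lt x hb, prodMetric_of_ne x hab,
    prodMetric_of_ne x hab.symm]
  ring

theorem gradUp_potential (a : Fin n) :
    gradUp (prodMetric n k) (potential n k) x a = (1 - χ k a) * x a := by
  rw [gradUp, sum_eq_single a (fun b _ hb => by rw [ginv_prodMetric, if_neg (Ne.symm hb), zero_mul])
    (by simp), ginv_prodMetric, if_pos rfl, pd_potential]
  by_cases ha : (a : ℕ) < k
  · rw [prodMetric_self_of_lt x ha, inv_one, one_mul]
  · rw [χ_of_le k (by omega)]
    ring

theorem sum_gradUp_potential_single_mul {a₀ : Fin n} (ha₀ : (a₀ : ℕ) < k) (F : Fin n → ℝ) :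
    ∑ a, gradUp (prodMetric n k) (potential n k) (EuclideanSpace.single a₀ 1) a * F a = F a₀ := by
  simp [gradUp_potential, PiLp.single_apply, χ_of_lt k ha₀]

end Weyl

end ProductSoliton

theorem product_soliton_harmonic_weyl_nonzero_radial_weyl_general
    (n k : ℕ) (hk : 2 ≤ k) (hk' : k ≤ n - 2) :
    -- (g, f) is a gradient shrinking Ricci soliton: Ric + ∇²f = λ g with λ = 1 > 0
    ((∀ x a b, Ric (prodMetric n k) x a b + Hess (prodMetric n k) (potential n k) x a b
        = 1 * prodMetric n k x a b) ∧ (0:ℝ) < 1) ∧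
      -- harmonic Weyl tensor: the Cotton tensor vanishes identically
      (∀ x a b c, Cotton (prodMetric n k) x a b c = 0) ∧
      -- but the radial Weyl curvature W(∇f,·,·,·) does not vanish identically
      (∃ x b c d, (∑ a, gradUp (prodMetric n k) (potential n k) x a *
          Weyl (prodMetric n k) x a b c d) ≠ 0) := by
  have hkn : k + 1 < n := by omega
  refine ⟨⟨fun x a b => by rw [one_mul]; exact ProductSoliton.Ric_add_Hess_potential x hkn a b,
    one_pos⟩, fun x => ProductSoliton.Cotton_prodMetric x hkn, ?_⟩
  let i₀ : Fin n := ⟨0, by omega⟩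
  let i₁ : Fin n := ⟨1, by omega⟩
  have hi₀ : (i₀ : ℕ) < k := by simp [i₀]; omega
  have hi₁ : (i₁ : ℕ) < k := by simp [i₁]; omega
  refine ⟨EuclideanSpace.single i₀ 1, i₁, i₀, i₁, ?_⟩
  rw [ProductSoliton.sum_gradUp_potential_single_mul hi₀,
    ProductSoliton.Weyl_prodMetric_of_lt _ hkn hi₀ hi₁ (by simp [i₀, i₁])]
  have hk₂ : (2 : ℝ) ≤ k := by exact_mod_cast hk
  have hkn₂ : (k : ℝ) + 2 ≤ n := by exact_mod_cast (show k + 2 ≤ n by omega)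
  exact (div_pos (by linarith) (mul_pos (by linarith) (by linarith))).ne'

theorem product_soliton_harmonic_weyl_nonzero_radial_weyl
    (n k : ℕ) (hn : 4 ≤ n) (hk : 2 ≤ k) (hk' : k ≤ n - 2) :
    -- (g, f) is a gradient shrinking Ricci soliton: Ric + ∇²f = λ g with λ = 1 > 0
    ((∀ x a b, Ric (prodMetric n k) x a b + Hess (prodMetric n k) (potential n k) x a b
        = 1 * prodMetric n k x a b) ∧ (0:ℝ) < 1) ∧
      -- harmonic Weyl tensor: the Cotton tensor vanishes identically
      (∀ x a b c, Cotton (prodMetric n k) x a b c = 0) ∧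
      -- but the radial Weyl curvature W(∇f,·,·,·) does not vanish identically
      (∃ x b c d, (∑ a, gradUp (prodMetric n k) (potential n k) x a *
          Weyl (prodMetric n k) x a b c d) ≠ 0) :=
  product_soliton_harmonic_weyl_nonzero_radial_weyl_general n k hk hk'

end
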